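/- Under the standing hypotheses on f, it holds that f(u ⊔ v) ≤ f(u) ⊔ f(v) for all u, v ∈ C; that is, additivity of f on the embedded lattice A lifts to additivity on the whole canonical extension C. (Theorem 4.3(1).) -/

import Mathlib

/-- An element is completely join-prime. -/
def CJPrime {C : Type*} [CompleteLattice C] (j : C) : Prop :=
  j ≠ ⊥ ∧ ∀ S : Set C, j ≤ sSup S → ∃ s ∈ S, j ≤ s

/-- An element is completely meet-prime. -/
def CMPrime {C : Type*} [CompleteLattice C] (m : C) : Prop :=
  m ≠ ⊤ ∧ ∀ S : Set C, sInf S ≤ m → ∃ s ∈ S, s ≤ m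

/-- ◇_f(u) = ⋁ { f j | j completely join-prime, j ≤ u }. -/
def diam {C D : Type*} [CompleteLattice C] [CompleteLattice D]
    (f : C → D) (u : C) : D :=
  sSup (f '' {j | CJPrime j ∧ j ≤ u})

/-- ■_f(v) = ⋁ { j | j completely join-prime, f j ≤ v }. -/
def bsq {C D : Type*} [CompleteLattice C] [CompleteLattice D]
    (f : C → D) (v : D) : C :=
  sSup {j | CJPrime j ∧ f j ≤ v}

/-- □_g(u) = ⋀ { g m | m completely meet-prime, u ≤ m }. -/
def boxg {C D : Type*} [CompleteLattice C] [CompleteLattice D]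
    (g : C → D) (u : C) : D :=
  sInf (g '' {m | CMPrime m ∧ u ≤ m})

/-- ◆_g(v) = ⋀ { m | m completely meet-prime, v ≤ g m }. -/
def bdiam {C D : Type*} [CompleteLattice C] [CompleteLattice D]
    (g : C → D) (v : D) : C :=
  sInf {m | CMPrime m ∧ v ≤ g m}

/-- Every element is the sup of the completely join-primes below it. -/
def JoinPerfect (C : Type*) [CompleteLattice C] : Prop :=
  ∀ u : C, u = sSup {j | CJPrime j ∧ j ≤ u}

/-- Every element is the inf of the completely meet-primes above it. -/
def MeetPerfect (C : Type*) [CompleteLattice C] : Prop :=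
  ∀ u : C, u = sInf {m | CMPrime m ∧ u ≤ m}

/-- `(C, e)` is a canonical extension of the bounded distributive lattice `A`. -/
structure IsCanonicalExtension {A C : Type*} [DistribLattice A] [BoundedOrder A]
    [CompleteLattice C] (e : A → C) : Prop where
  injective : Function.Injective e
  map_bot : e ⊥ = ⊥
  map_top : e ⊤ = ⊤
  map_inf : ∀ a b : A, e (a ⊓ b) = e a ⊓ e b
  map_sup : ∀ a b : A, e (a ⊔ b) = e a ⊔ e b
  dense_joinOfMeets : ∀ u : C, ∃ 𝒮 : Set (Set A),
      u = sSup ((fun S => sInf (e '' S)) '' 𝒮)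
  dense_meetOfJoins : ∀ u : C, ∃ 𝒮 : Set (Set A),
      u = sInf ((fun S => sSup (e '' S)) '' 𝒮)
  compact : ∀ S T : Set A, sInf (e '' S) ≤ sSup (e '' T) →
      ∃ F : Finset A, ↑F ⊆ S ∧ ∃ G : Finset A, ↑G ⊆ T ∧ F.inf id ≤ G.sup id

/-- Closed elements of the canonical extension: meets of subsets of `e(A)`. -/
def ClosedElem {A C : Type*} [CompleteLattice C] (e : A → C) (x : C) : Prop :=
  ∃ S : Set A, x = sInf (e '' S)

/-- Open elements of the canonical extension: joins of subsets of `e(A)`. -/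
def OpenElem {A C : Type*} [CompleteLattice C] (e : A → C) (x : C) : Prop :=
  ∃ S : Set A, x = sSup (e '' S)

/-- Nonempty downward-directed family. -/
def DownDir {C : Type*} [Preorder C] (𝒞 : Set C) : Prop :=
  𝒞.Nonempty ∧ ∀ x ∈ 𝒞, ∀ y ∈ 𝒞, ∃ z ∈ 𝒞, z ≤ x ∧ z ≤ y

/-- Nonempty upward-directed family. -/
def UpDir {C : Type*} [Preorder C] (𝒪 : Set C) : Prop :=
  𝒪.Nonempty ∧ ∀ x ∈ 𝒪, ∀ y ∈ 𝒪, ∃ z ∈ 𝒪, x ≤ z ∧ y ≤ z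

/-- `h` preserves down-directed meets of closed elements. -/
def ClosedEsakia {A C D : Type*} [CompleteLattice C] [CompleteLattice D]
    (e : A → C) (h : C → D) : Prop :=
  ∀ 𝒞 : Set C, DownDir 𝒞 → (∀ c ∈ 𝒞, ClosedElem e c) →
    h (sInf 𝒞) = sInf (h '' 𝒞)

/-- `h` preserves up-directed joins of open elements. -/
def OpenEsakia {A C D : Type*} [CompleteLattice C] [CompleteLattice D]
    (e : A → C) (h : C → D) : Prop :=
  ∀ 𝒪 : Set C, UpDir 𝒪 → (∀ o ∈ 𝒪, OpenElem e o) →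
    h (sSup 𝒪) = sSup (h '' 𝒪)

/-!
As `D` is meet-perfect, it suffices that `f (u ⊔ v) ≤ n` for each completely meet-prime
`n ≥ f u ⊔ f v`. The set
`T = {a | f (e a) ≤ n}` contains `⊥` and, by additivity on `A`, is closed under `⊔`; so `e '' T`
is an up-directed family of open elements and open Esakia gives `f (⋁ e '' T) ≤ n`. It remains to
see `u ⊔ v ≤ ⋁ e '' T`. Each completely join-prime `j ≤ u ⊔ v` lies below `u` or `v`, so
`f j ≤ n`; being closed, `j` is the down-directed meet of the `e a` above it, and closed Esakia
together with meet-primeness of `n` yields one such `a` in `T`. Join-perfectness of `C` concludes.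
-/

open Set

theorem CJPrime.le_or_le {C : Type*} [CompleteLattice C] {j u v : C} (hj : CJPrime j)
    (h : j ≤ u ⊔ v) : j ≤ u ∨ j ≤ v := by
  obtain ⟨s, rfl | rfl, hjs⟩ := hj.2 {u, v} (by rwa [sSup_pair])
  exacts [Or.inl hjs, Or.inr hjs]

section Directed

variable {A C : Type*} [Lattice A] [CompleteLattice C] {e : A → C} {T : Set A}

theorem upDir_image_of_supClosed (he : Monotone e) (hT : SupClosed T) (hne : T.Nonempty) :
    UpDir (e '' T) :=
  ⟨hne.image e, by
    rintro _ ⟨a, ha, rfl⟩ _ ⟨b, hb, rfl⟩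
    exact ⟨e (a ⊔ b), mem_image_of_mem e (hT ha hb), he le_sup_left, he le_sup_right⟩⟩

theorem downDir_image_of_infClosed (he : Monotone e) (hT : InfClosed T) (hne : T.Nonempty) :
    DownDir (e '' T) :=
  ⟨hne.image e, by
    rintro _ ⟨a, ha, rfl⟩ _ ⟨b, hb, rfl⟩
    exact ⟨e (a ⊓ b), mem_image_of_mem e (hT ha hb), he inf_le_left, he inf_le_right⟩⟩

end Directed

section Esakia

variable {A C D : Type*} [Lattice A] [CompleteLattice C] [CompleteLattice D]
  {e : A → C} {f : C → D} {T : Set A}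

theorem OpenEsakia.map_sSup_image (hf : OpenEsakia e f) (he : Monotone e) (hT : SupClosed T)
    (hne : T.Nonempty) : f (sSup (e '' T)) = sSup (f '' (e '' T)) :=
  hf _ (upDir_image_of_supClosed he hT hne) fun _ ⟨a, _, ha⟩ => ⟨{a}, by simp [← ha]⟩

theorem ClosedEsakia.map_sInf_image (hf : ClosedEsakia e f) (he : Monotone e) (hT : InfClosed T)
    (hne : T.Nonempty) : f (sInf (e '' T)) = sInf (f '' (e '' T)) :=
  hf _ (downDir_image_of_infClosed he hT hne) fun _ ⟨a, _, ha⟩ => ⟨{a}, by simp [← ha]⟩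

end Esakia

theorem ClosedElem.eq_sInf_image_le {A C : Type*} [CompleteLattice C] {e : A → C} {x : C}
    (hx : ClosedElem e x) : x = sInf (e '' {a | x ≤ e a}) := by
  obtain ⟨S, rfl⟩ := hx
  refine le_antisymm (le_sInf ?_) (sInf_le_sInf (image_mono fun a ha => sInf_le ⟨a, ha, rfl⟩))
  rintro _ ⟨a, ha, rfl⟩
  exact ha

namespace IsCanonicalExtension

variable {A C : Type*} [DistribLattice A] [BoundedOrder A] [CompleteLattice C] {e : A → C}

theorem monotone (he : IsCanonicalExtension e) : Monotone e := fun _ _ hab =>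
  sup_eq_right.mp (by rw [← he.map_sup, sup_eq_right.mpr hab])

theorem closedElem_of_cjPrime (he : IsCanonicalExtension e) {j : C} (hj : CJPrime j) :
    ClosedElem e j := by
  obtain ⟨𝒮, h𝒮⟩ := he.dense_joinOfMeets j
  obtain ⟨_, ⟨S, hS, rfl⟩, hjS⟩ := hj.2 _ h𝒮.le
  exact ⟨S, le_antisymm hjS (h𝒮 ▸ le_sSup ⟨S, hS, rfl⟩)⟩

theorem infClosed_setOf_le (he : IsCanonicalExtension e) (x : C) :
    InfClosed {a | x ≤ e a} := fun a ha b hb => by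
  simpa only [mem_ofPred_eq, he.map_inf] using le_inf ha hb

theorem exists_le_of_map_le_cmPrime {D : Type*} [CompleteLattice D] {f : C → D}
    (he : IsCanonicalExtension e) (hf : ClosedEsakia e f) {n : D} (hn : CMPrime n) {x : C}
    (hx : ClosedElem e x) (hfx : f x ≤ n) : ∃ a, x ≤ e a ∧ f (e a) ≤ n := by
  have hne : {a | x ≤ e a}.Nonempty := ⟨⊤, by simp [he.map_top]⟩
  rw [hx.eq_sInf_image_le, hf.map_sInf_image he.monotone (he.infClosed_setOf_le x) hne] at hfx
  obtain ⟨_, ⟨_, ⟨a, hxa, rfl⟩, rfl⟩, han⟩ := hn.2 _ hfx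
  exact ⟨a, hxa, han⟩

end IsCanonicalExtension

theorem map_sup_le_of_cmPrime {A C D : Type*} [DistribLattice A] [BoundedOrder A]
    [CompleteLattice C] [CompleteLattice D] {e : A → C} {f : C → D}
    (he : IsCanonicalExtension e) (hC : JoinPerfect C) (hf : Monotone f)
    (hfc : ClosedEsakia e f) (hfo : OpenEsakia e f)
    (hadd : ∀ a b : A, f (e (a ⊔ b)) ≤ f (e a) ⊔ f (e b))
    {u v : C} {n : D} (hn : CMPrime n) (huvn : f u ⊔ f v ≤ n) : f (u ⊔ v) ≤ n := by
  set T : Set A := {a | f (e a) ≤ n}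
  have hT : SupClosed T := fun a ha b hb => (hadd a b).trans (sup_le ha hb)
  have hbot : ⊥ ∈ T := by
    simpa only [T, mem_ofPred_eq, he.map_bot] using (hf bot_le).trans (le_sup_left.trans huvn)
  have hjT : ∀ j, CJPrime j → j ≤ u ⊔ v → j ≤ sSup (e '' T) := by
    intro j hj hjuv
    have hfj : f j ≤ n := by
      rcases hj.le_or_le hjuv with hju | hjv
      exacts [(hf hju).trans (le_sup_left.trans huvn), (hf hjv).trans (le_sup_right.trans huvn)]
    obtain ⟨a, hja, ha⟩ := he.exists_le_of_map_le_cmPrime hfc hn (he.closedElem_of_cjPrime hj) hfj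
    exact hja.trans (le_sSup (mem_image_of_mem e ha))
  calc f (u ⊔ v) ≤ f (sSup (e '' T)) :=
        hf ((hC _).trans_le (sSup_le fun j ⟨hj, hjuv⟩ => hjT j hj hjuv))
    _ = sSup (f '' (e '' T)) := hfo.map_sSup_image he.monotone hT ⟨⊥, hbot⟩
    _ ≤ n := sSup_le (by rintro _ ⟨_, ⟨a, ha, rfl⟩, rfl⟩; exact ha)

theorem stmt11_general {A C D : Type*} [DistribLattice A] [BoundedOrder A]
    [CompleteLattice C] [CompleteLattice D]
    (eA : A → C)
    (hceA : IsCanonicalExtension eA)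
    (hCj : JoinPerfect C)
    (hDm : MeetPerfect D)
    (f : C → D) (hf : Monotone f)
    (hfcE : ClosedEsakia eA f) (hfoE : OpenEsakia eA f)
    (hadd : ∀ a b : A, f (eA (a ⊔ b)) ≤ f (eA a) ⊔ f (eA b)) :
    ∀ u v : C, f (u ⊔ v) ≤ f u ⊔ f v := by
  intro u v
  rw [hDm (f u ⊔ f v)]
  exact le_sInf fun n ⟨hn, huvn⟩ =>
    map_sup_le_of_cmPrime hceA hCj hf hfcE hfoE hadd hn huvn

/-- Theorem 4.3(1): under the standing hypotheses on `f`, additivity on the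
embedded lattice lifts to additivity on all of `C`. -/
theorem stmt11 {A B C D : Type*} [DistribLattice A] [BoundedOrder A]
    [DistribLattice B] [BoundedOrder B] [CompleteLattice C] [CompleteLattice D]
    (eA : A → C) (eB : B → D)
    (hceA : IsCanonicalExtension eA) (hceB : IsCanonicalExtension eB)
    (hCj : JoinPerfect C) (hCm : MeetPerfect C)
    (hDj : JoinPerfect D) (hDm : MeetPerfect D)
    (f : C → D) (hf : Monotone f)
    (hfcE : ClosedEsakia eA f) (hfoE : OpenEsakia eA f)
    (hcl : ∀ a : A, ClosedElem eB (f (eA a)))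
    (hadd : ∀ a b : A, f (eA (a ⊔ b)) ≤ f (eA a) ⊔ f (eA b)) :
    ∀ u v : C, f (u ⊔ v) ≤ f u ⊔ f v :=
  stmt11_general eA hceA hCj hDm f hf hfcE hfoE hadd
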